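/- arXiv:2109.04804 — 2 statements merged into one kernel-verified Lean document; each statement's English description precedes it below -/
import Mathlib

section
/- Let c = (0, 1/2, 1). For every real polynomial p of degree at most 5, with p' the derivative polynomial, both nontrivial stage quadratures of the sixth-order two-derivative Hermite–Birkhoff tableau are exact: (i) ∫₀^{1/2} p(t) dt = (101/480)·p(0) + (8/30)·p(1/2) + (55/2400)·p(1) + (65/4800)·p'(0) − (25/600)·p'(1/2) − (25/8000)·p'(1); and (ii) ∫₀^{1} p(t) dt = (7/30)·p(0) + (16/30)·p(1/2) + (7/30)·p(1) + (5/300)·p'(0) − (5/300)·p'(1). -/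
/-!
Both sides of each identity are linear in `p`, and polynomials of degree at most 5 are spanned
by `1, t, …, t⁵`; so it suffices to check the two quadratures on these monomials, where each
identity is a rational computation.
-/

open Polynomial intervalIntegral

namespace Polynomial

noncomputable def intervalIntegralLinearMap (a b : ℝ) : ℝ[X] →ₗ[ℝ] ℝ where
  toFun p := ∫ t in a..b, p.eval t
  map_add' p q := by
    simp only [eval_add]
    exact integral_add (p.continuous.intervalIntegrable a b) (q.continuous.intervalIntegrable a b)
  map_smul' c p := by simp [integral_const_mul]

theorem eqOn_degreeLT_of_eq_X_pow {R M : Type*} [Semiring R] [AddCommMonoid M] [Module R M]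
    {f g : R[X] →ₗ[R] M} {n : ℕ} (h : ∀ k < n, f (X ^ k) = g (X ^ k)) :
    Set.EqOn f g (degreeLT R n) := by
  classical
  rw [degreeLT_eq_span_X_pow]
  refine LinearMap.eqOn_span' ?_
  simp only [Finset.coe_image, Finset.coe_range]
  rintro _ ⟨k, hk, rfl⟩
  exact h k hk

theorem intervalIntegral_eval_eq_of_degree_lt {L : ℝ[X] →ₗ[ℝ] ℝ} {a b : ℝ} {n : ℕ}
    (h : ∀ k < n, ∫ t in a..b, (X ^ k : ℝ[X]).eval t = L (X ^ k)) {p : ℝ[X]}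
    (hp : p.degree < n) :
    ∫ t in a..b, p.eval t = L p :=
  eqOn_degreeLT_of_eq_X_pow (f := intervalIntegralLinearMap a b) h (mem_degreeLT.2 hp)

end Polynomial

noncomputable def twoDerivativeQuadrature {ι : Type*} [Fintype ι] (c w₁ w₂ : ι → ℝ) :
    ℝ[X] →ₗ[ℝ] ℝ :=
  ∑ j, (w₁ j • leval (c j) + w₂ j • (leval (c j) ∘ₗ derivative))

theorem twoDerivativeQuadrature_apply {ι : Type*} [Fintype ι] (c w₁ w₂ : ι → ℝ) (p : ℝ[X]) :
    twoDerivativeQuadrature c w₁ w₂ p =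
      ∑ j, (w₁ j * p.eval (c j) + w₂ j * p.derivative.eval (c j)) := by
  simp [twoDerivativeQuadrature]

namespace HermiteBirkhoff6

noncomputable def nodes : Fin 3 → ℝ := ![0, 1 / 2, 1]

noncomputable def B₁ : Matrix (Fin 3) (Fin 3) ℝ :=
  !![0, 0, 0; 101 / 480, 8 / 30, 55 / 2400; 7 / 30, 16 / 30, 7 / 30]

noncomputable def B₂ : Matrix (Fin 3) (Fin 3) ℝ :=
  !![0, 0, 0; 65 / 4800, -25 / 600, -25 / 8000; 5 / 300, 0, -5 / 300]

theorem integral_X_pow_eq_stage (l : Fin 3) {k : ℕ} (hk : k < 6) :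
    ∫ t in (0 : ℝ)..nodes l, (X ^ k : ℝ[X]).eval t =
      twoDerivativeQuadrature nodes (B₁ l) (B₂ l) (X ^ k) := by
  simp only [eval_X_pow, integral_pow, twoDerivativeQuadrature_apply, Fin.sum_univ_three,
    derivative_X_pow, eval_mul, eval_C]
  fin_cases l <;> interval_cases k <;> simp [nodes, B₁, B₂] <;> norm_num

theorem integral_eq_stage (l : Fin 3) {p : ℝ[X]} (hp : p.degree < 6) :
    ∫ t in (0 : ℝ)..nodes l, p.eval t = twoDerivativeQuadrature nodes (B₁ l) (B₂ l) p :=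
  intervalIntegral_eval_eq_of_degree_lt (fun _ hk => integral_X_pow_eq_stage l hk) hp

end HermiteBirkhoff6

/-- The two nontrivial stage quadratures of the sixth-order two-derivative
Hermite–Birkhoff tableau (nodes 0, 1/2, 1) are exact on quintic polynomials. -/
theorem hermite_birkhoff_quadrature_order6 (p : Polynomial ℝ) (hp : p.degree ≤ 5) :
    (∫ t in (0 : ℝ)..(1 / 2 : ℝ), p.eval t =
        (101 / 480) * p.eval 0 + (8 / 30) * p.eval (1 / 2) + (55 / 2400) * p.eval 1 +
          (65 / 4800) * (p.derivative).eval 0 - (25 / 600) * (p.derivative).eval (1 / 2) -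
          (25 / 8000) * (p.derivative).eval 1) ∧
    (∫ t in (0 : ℝ)..(1 : ℝ), p.eval t =
        (7 / 30) * p.eval 0 + (16 / 30) * p.eval (1 / 2) + (7 / 30) * p.eval 1 +
          (5 / 300) * (p.derivative).eval 0 - (5 / 300) * (p.derivative).eval 1) := by
  have hp6 : p.degree < 6 := hp.trans_lt (by norm_num)
  have h₁ := HermiteBirkhoff6.integral_eq_stage 1 hp6
  have h₂ := HermiteBirkhoff6.integral_eq_stage 2 hp6
  simp [twoDerivativeQuadrature_apply, Fin.sum_univ_three, HermiteBirkhoff6.nodes,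
    HermiteBirkhoff6.B₁, HermiteBirkhoff6.B₂] at h₁ h₂
  rw [one_div, h₁, h₂]
  constructor <;> ring
end

section
/- Let c = (0, 1/3, 2/3, 1). For every real polynomial p of degree at most 7, with p' the derivative polynomial, all three nontrivial stage quadratures of the eighth-order two-derivative Hermite–Birkhoff tableau are exact: (i) ∫₀^{1/3} p(t) dt = (6893/54432)·p(0) + (313/2016)·p(1/3) + (89/2016)·p(2/3) + (397/54432)·p(1) + (1283/272160)·p'(0) − (851/30240)·p'(1/3) − (269/30240)·p'(2/3) − (163/272160)·p'(1); (ii) ∫₀^{2/3} p(t) dt = (223/1701)·p(0) + (20/63)·p(1/3) + (13/63)·p(2/3) + (20/1701)·p(1) + (43/8505)·p'(0) − (16/945)·p'(1/3) − (19/945)·p'(2/3) − (8/8505)·p'(1); and (iii) ∫₀^{1} p(t) dt = (31/224)·p(0) + (81/224)·p(1/3) + (81/224)·p(2/3) + (31/224)·p(1) + (19/3360)·p'(0) − (9/1120)·p'(1/3) + (9/1120)·p'(2/3) − (19/3360)·p'(1). -/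
/-!
Both sides of each stage quadrature are linear in `p`, so exactness on polynomials of degree
below 8 reduces to the monomials `t ^ k`, `k < 8`. For these it is the rational identity
`c_l ^ (k + 1) / (k + 1) = ∑ⱼ (B⁽¹⁾ₗⱼ cⱼ ^ k + k B⁽²⁾ₗⱼ cⱼ ^ (k - 1))`, checked by computation.
-/

open Polynomial intervalIntegral

namespace Polynomial

theorem degreeLT_le_ker_of_map_X_pow {R M : Type*} [Semiring R] [AddCommMonoid M] [Module R M]
    (L : R[X] →ₗ[R] M) {n : ℕ} (h : ∀ k < n, L (X ^ k) = 0) : degreeLT R n ≤ LinearMap.ker L := by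
  classical
  rw [degreeLT_eq_span_X_pow, Submodule.span_le, Finset.coe_image, Set.image_subset_iff]
  exact fun k hk => h k (Finset.mem_range.1 hk)

noncomputable def intervalIntegralₗ (a b : ℝ) : ℝ[X] →ₗ[ℝ] ℝ where
  toFun p := ∫ t in a..b, p.eval t
  map_add' p q := by
    simp only [eval_add]
    exact integral_add (p.continuous.intervalIntegrable a b) (q.continuous.intervalIntegrable a b)
  map_smul' r p := by simp only [eval_smul, smul_eq_mul, integral_const_mul, RingHom.id_apply]

theorem intervalIntegralₗ_zero_X_pow (a : ℝ) (k : ℕ) :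
    intervalIntegralₗ 0 a (X ^ k) = a ^ (k + 1) / (k + 1) := by
  simp [intervalIntegralₗ, integral_pow]

noncomputable def twoDerivQuadrature {m : ℕ} (c b₁ b₂ : Fin m → ℝ) : ℝ[X] →ₗ[ℝ] ℝ :=
  ∑ j, (b₁ j • leval (c j) + b₂ j • leval (c j) ∘ₗ derivative)

theorem twoDerivQuadrature_apply {m : ℕ} (c b₁ b₂ : Fin m → ℝ) (p : ℝ[X]) :
    twoDerivQuadrature c b₁ b₂ p =
      ∑ j, (b₁ j * p.eval (c j) + b₂ j * p.derivative.eval (c j)) := by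
  simp [twoDerivQuadrature, leval]

end Polynomial

namespace HermiteBirkhoff8

noncomputable def nodes : Fin 4 → ℝ := ![0, 1 / 3, 2 / 3, 1]

noncomputable def B₁ : Matrix (Fin 4) (Fin 4) ℝ :=
  !![0, 0, 0, 0;
    6893 / 54432, 313 / 2016, 89 / 2016, 397 / 54432;
    223 / 1701, 20 / 63, 13 / 63, 20 / 1701;
    31 / 224, 81 / 224, 81 / 224, 31 / 224]

noncomputable def B₂ : Matrix (Fin 4) (Fin 4) ℝ :=
  !![0, 0, 0, 0;
    1283 / 272160, -851 / 30240, -269 / 30240, -163 / 272160;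
    43 / 8505, -16 / 945, -19 / 945, -8 / 8505;
    19 / 3360, -9 / 1120, 9 / 1120, -19 / 3360]

theorem quadrature_X_pow (l : Fin 4) {k : ℕ} (hk : k < 8) :
    intervalIntegralₗ 0 (nodes l) (X ^ k) = twoDerivQuadrature nodes (B₁ l) (B₂ l) (X ^ k) := by
  rw [intervalIntegralₗ_zero_X_pow, twoDerivQuadrature_apply]
  simp only [derivative_X_pow, eval_pow, eval_X, eval_mul, eval_C]
  fin_cases l <;> interval_cases k <;> simp [Fin.sum_univ_four, nodes, B₁, B₂] <;> norm_num

theorem quadrature_exact (l : Fin 4) {p : ℝ[X]} (hp : p ∈ degreeLT ℝ 8) :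
    ∫ t in (0 : ℝ)..nodes l, p.eval t = twoDerivQuadrature nodes (B₁ l) (B₂ l) p :=
  sub_eq_zero.1 <| degreeLT_le_ker_of_map_X_pow
    (intervalIntegralₗ 0 (nodes l) - twoDerivQuadrature nodes (B₁ l) (B₂ l))
    (fun _ hk => sub_eq_zero.2 (quadrature_X_pow l hk)) hp

end HermiteBirkhoff8

/-- The three nontrivial stage quadratures of the eighth-order two-derivative
Hermite–Birkhoff tableau (nodes 0, 1/3, 2/3, 1) are exact on polynomials of
degree at most 7. -/
theorem hermite_birkhoff_quadrature_order8 (p : Polynomial ℝ) (hp : p.degree ≤ 7) :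
    (∫ t in (0 : ℝ)..(1 / 3 : ℝ), p.eval t =
        (6893 / 54432) * p.eval 0 + (313 / 2016) * p.eval (1 / 3) +
          (89 / 2016) * p.eval (2 / 3) + (397 / 54432) * p.eval 1 +
          (1283 / 272160) * (p.derivative).eval 0 -
          (851 / 30240) * (p.derivative).eval (1 / 3) -
          (269 / 30240) * (p.derivative).eval (2 / 3) -
          (163 / 272160) * (p.derivative).eval 1) ∧
    (∫ t in (0 : ℝ)..(2 / 3 : ℝ), p.eval t =
        (223 / 1701) * p.eval 0 + (20 / 63) * p.eval (1 / 3) +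
          (13 / 63) * p.eval (2 / 3) + (20 / 1701) * p.eval 1 +
          (43 / 8505) * (p.derivative).eval 0 -
          (16 / 945) * (p.derivative).eval (1 / 3) -
          (19 / 945) * (p.derivative).eval (2 / 3) -
          (8 / 8505) * (p.derivative).eval 1) ∧
    (∫ t in (0 : ℝ)..(1 : ℝ), p.eval t =
        (31 / 224) * p.eval 0 + (81 / 224) * p.eval (1 / 3) +
          (81 / 224) * p.eval (2 / 3) + (31 / 224) * p.eval 1 +
          (19 / 3360) * (p.derivative).eval 0 -
          (9 / 1120) * (p.derivative).eval (1 / 3) +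
          (9 / 1120) * (p.derivative).eval (2 / 3) -
          (19 / 3360) * (p.derivative).eval 1) := by
  have hp8 : p ∈ degreeLT ℝ 8 := mem_degreeLT.2 (hp.trans_lt (by norm_num))
  have hrow l := (HermiteBirkhoff8.quadrature_exact l hp8).trans (twoDerivQuadrature_apply _ _ _ p)
  open HermiteBirkhoff8 in
  refine ⟨(hrow 1).trans ?_, (hrow 2).trans ?_, (hrow 3).trans ?_⟩ <;>
    simp [Fin.sum_univ_four, nodes, B₁, B₂] <;> ring
end
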